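/- arXiv:2005.00125 — 3 statements merged into one kernel-verified Lean document; each statement's English description precedes it below -/
import Mathlib

section
/- Let A be a finite convex set of real numbers. Then |2A − A| ≫ |A|^2, i.e. there is an absolute constant c > 0 such that the set 2A − A = {x₁ + x₂ − x₃ : x₁, x₂, x₃ ∈ A} has at least c·|A|² elements. -/
/-!
Enumerate `A` increasingly as `a₀ < ⋯ < a_{N-1}` with gaps `dᵢ = a_{i+1} - aᵢ`. For `i < j` the
element `a_j + dᵢ = a_j + a_{i+1} - aᵢ` of `2A - A` lies in `(a_j, a_j + d_j) = (a_j, a_{j+1})`,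
because the gaps increase. So the block `{a_j} ∪ {a_j + dᵢ : i < j}` has `j + 1` elements in
`[a_j, a_{j+1})`, and the blocks are disjoint: `|2A - A| ≥ ∑_{j < N} (j + 1) = N (N + 1) / 2`.
-/

open Finset Pointwise

/-- The list of consecutive differences of a list of reals. -/
def diffList : List ℝ → List ℝ
  | a :: b :: rest => (b - a) :: diffList (b :: rest)
  | _ => []

/-- `ListKConvex k l` means the increasing list `l` is `k`-convex: `l` is strictly
increasing and its iterated difference lists of orders `1, …, k` are strictly increasing. -/
def ListKConvex : ℕ → List ℝ → Prop
  | 0, l => l.Chain' (· < ·)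
  | k + 1, l => l.Chain' (· < ·) ∧ ListKConvex k (diffList l)

/-- A finite set of reals is `k`-convex if its increasing enumeration is `k`-convex. -/
def FinsetKConvex (k : ℕ) (A : Finset ℝ) : Prop :=
  ListKConvex k (A.sort (· ≤ ·))

/-- `iterSum n A = A + ⋯ + A` (`n` copies), with `iterSum 0 A = {0}`. -/
noncomputable def iterSum : ℕ → Finset ℝ → Finset ℝ
  | 0, _ => {0}
  | n + 1, A => A + iterSum n A

lemma length_diffList (l : List ℝ) : (diffList l).length = l.length - 1 := by
  match l with
  | [] => rfl
  | [_] => rfl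
  | _ :: b :: rest => simp [diffList, length_diffList (b :: rest)]

lemma getD_diffList (l : List ℝ) (i : ℕ) (h : i + 1 < l.length) :
    (diffList l).getD i 0 = l.getD (i + 1) 0 - l.getD i 0 := by
  match l, i with
  | _ :: _ :: _, 0 => simp [diffList]
  | _ :: b :: rest, i + 1 =>
    simpa [diffList] using getD_diffList (b :: rest) i (by simpa using h)

lemma List.IsChain.strictMonoOn_getD {α : Type*} [Preorder α] {l : List α}
    (h : l.IsChain (· < ·)) (d : α) : StrictMonoOn (l.getD · d) (Set.Iio l.length) := by
  intro i hi j hj hij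
  rw [List.isChain_iff_pairwise, List.pairwise_iff_getElem] at h
  change l.getD i d < l.getD j d
  rw [List.getD_eq_getElem _ _ hi, List.getD_eq_getElem _ _ hj]
  exact h i j hi hj hij

lemma strictMonoOn_gap_of_listKConvex_one {l : List ℝ} (hl : ListKConvex 1 l) :
    StrictMonoOn (fun i => l.getD (i + 1) 0 - l.getD i 0) (Set.Iio (l.length - 1)) := by
  have hdiff := hl.2.strictMonoOn_getD 0
  rw [length_diffList] at hdiff
  exact hdiff.congr fun i hi => getD_diffList l i (by simp at hi; omega)

section ConvexSequence

variable {a : ℕ → ℝ} {N : ℕ}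

noncomputable def convexBlock (a : ℕ → ℝ) (j : ℕ) : Finset ℝ :=
  insert (a j) ((range j).image fun i => a j + (a (i + 1) - a i))

lemma gap_pos (ha : StrictMonoOn a (Set.Iio N)) {i : ℕ} (hi : i + 1 < N) :
    0 < a (i + 1) - a i :=
  sub_pos.2 <| ha (by simp; omega) (by simpa using hi) (Nat.lt_succ_self i)

lemma le_of_mem_convexBlock (ha : StrictMonoOn a (Set.Iio N)) {j : ℕ} (hj : j < N)
    {x : ℝ} (hx : x ∈ convexBlock a j) : a j ≤ x := by
  simp only [convexBlock, mem_insert, mem_image, mem_range] at hx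
  rcases hx with rfl | ⟨i, hi, rfl⟩
  · exact le_rfl
  · linarith [gap_pos ha (i := i) (by omega)]

lemma lt_of_mem_convexBlock (ha : StrictMonoOn a (Set.Iio N))
    (hd : StrictMonoOn (fun i => a (i + 1) - a i) (Set.Iio (N - 1))) {j : ℕ} (hj : j + 1 < N)
    {x : ℝ} (hx : x ∈ convexBlock a j) : x < a (j + 1) := by
  simp only [convexBlock, mem_insert, mem_image, mem_range] at hx
  rcases hx with rfl | ⟨i, hi, rfl⟩
  · linarith [gap_pos ha hj]
  · have : a (i + 1) - a i < a (j + 1) - a j :=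
      hd (by simp; omega) (by simp; omega) hi
    linarith

lemma card_convexBlock (ha : StrictMonoOn a (Set.Iio N))
    (hd : StrictMonoOn (fun i => a (i + 1) - a i) (Set.Iio (N - 1))) {j : ℕ} (hj : j < N) :
    (convexBlock a j).card = j + 1 := by
  have hinj : Set.InjOn (fun i => a j + (a (i + 1) - a i)) (range j) := by
    refine fun i hi i' hi' h => (hd.injOn ?_ ?_ (add_left_cancel h)) <;>
      simp at hi hi' ⊢ <;> omega
  rw [convexBlock, card_insert_of_notMem, card_image_of_injOn hinj, card_range]
  simp only [mem_image, mem_range, not_exists, not_and]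
  intro i hi h
  linarith [gap_pos ha (i := i) (by omega)]

lemma pairwiseDisjoint_convexBlock (ha : StrictMonoOn a (Set.Iio N))
    (hd : StrictMonoOn (fun i => a (i + 1) - a i) (Set.Iio (N - 1))) :
    (range N : Set ℕ).PairwiseDisjoint (convexBlock a) := by
  have disjoint_of_lt : ∀ j k, j < k → k < N → Disjoint (convexBlock a j) (convexBlock a k) := by
    intro j k hjk hk
    refine disjoint_left.2 fun x hxj hxk => ?_
    have hmono : a (j + 1) ≤ a k := ha.monotoneOn (by simp; omega) (by simpa using hk) hjk
    linarith [lt_of_mem_convexBlock ha hd (by omega) hxj, le_of_mem_convexBlock ha hk hxk]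
  intro j hj k hk hne
  simp only [coe_range, Set.mem_Iio] at hj hk
  rcases hne.lt_or_gt with h | h
  · exact disjoint_of_lt j k h hk
  · exact (disjoint_of_lt k j h hj).symm

theorem card_ge_of_convex_sequence (ha : StrictMonoOn a (Set.Iio N))
    (hd : StrictMonoOn (fun i => a (i + 1) - a i) (Set.Iio (N - 1))) (S : Finset ℝ)
    (hS : ∀ i j k, i < N → j < N → k < N → a i + a j - a k ∈ S) :
    N * (N + 1) ≤ 2 * S.card := by
  have hsub : (range N).biUnion (convexBlock a) ⊆ S := by
    intro x hx
    simp only [mem_biUnion, mem_range, convexBlock, mem_insert, mem_image] at hx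
    obtain ⟨j, hj, rfl | ⟨i, hi, rfl⟩⟩ := hx
    · simpa using hS j j j hj hj hj
    · simpa [add_sub_assoc] using hS j (i + 1) i hj (by omega) (by omega)
  have hcard : ∑ j ∈ range N, (j + 1) = ((range N).biUnion (convexBlock a)).card := by
    rw [card_biUnion (pairwiseDisjoint_convexBlock ha hd)]
    exact sum_congr rfl fun j hj => (card_convexBlock ha hd (mem_range.1 hj)).symm
  have hgauss : (∑ j ∈ range N, (j + 1)) * 2 = N * (N + 1) := by
    have := sum_range_id_mul_two (N + 1)
    rw [sum_range_succ'] at this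
    simpa [mul_comm] using this
  have := card_le_card hsub
  omega

end ConvexSequence

lemma add_sub_mem_iterSum_two_sub_one {A : Finset ℝ} {x y z : ℝ} (hx : x ∈ A) (hy : y ∈ A)
    (hz : z ∈ A) : x + y - z ∈ iterSum 2 A - iterSum 1 A := by
  have h0 : (0 : ℝ) ∈ iterSum 0 A := mem_singleton_self 0
  have h := sub_mem_sub (add_mem_add hx (add_mem_add hy h0)) (add_mem_add hz h0)
  rwa [add_zero, add_zero] at h

/-- If `A` is a finite convex set of reals, then `|2A - A| ≫ |A|²`. -/
theorem stmt0 :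
    ∃ c : ℝ, 0 < c ∧ ∀ A : Finset ℝ, FinsetKConvex 1 A →
      c * (A.card : ℝ) ^ 2 ≤ ((iterSum 2 A - iterSum 1 A).card : ℝ) := by
  refine ⟨1 / 2, by norm_num, fun A hA => ?_⟩
  set l := A.sort (· ≤ ·)
  have hlen : l.length = A.card := length_sort _
  have hmem : ∀ i < A.card, l.getD i 0 ∈ A := fun i hi => by
    rw [List.getD_eq_getElem _ _ (hlen ▸ hi)]
    exact (mem_sort _).1 (List.getElem_mem _)
  have hbound := card_ge_of_convex_sequence (a := (l.getD · 0))
    (hlen ▸ hA.1.strictMonoOn_getD 0) (hlen ▸ strictMonoOn_gap_of_listKConvex_one hA) _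
    fun i j k hi hj hk => add_sub_mem_iterSum_two_sub_one (hmem i hi) (hmem j hj) (hmem k hk)
  have : ((A.card * (A.card + 1) : ℕ) : ℝ) ≤ ((2 * (iterSum 2 A - iterSum 1 A).card : ℕ) : ℝ) :=
    by exact_mod_cast hbound
  push_cast at this
  nlinarith
end

section
/- Let I be an interval, let f be 1-convex on I, and let A ⊆ I be a finite set of reals with |A| sufficiently large. If |A + A − A| ≤ K|A|, then |2f(A) − f(A)| ≫ |A|² / ( K·(log |A|)³ ), i.e. there is an absolute constant c > 0 such that the set {f(a₁) + f(a₂) − f(a₃) : aᵢ ∈ A} has at least c·|A|²/(K(log |A|)³) elements. -/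
open Finset Pointwise

/-- A function `f` is `k`-convex on `I` if its derivatives `f⁽¹⁾, …, f⁽ᵏ⁺¹⁾` exist and
are nonvanishing at every point of `I`. -/
def FnKConvexOn (k : ℕ) (f : ℝ → ℝ) (I : Set ℝ) : Prop :=
  ∀ i ≤ k, (∀ x ∈ I, DifferentiableAt ℝ (iteratedDeriv i f) x) ∧
    ∀ x ∈ I, iteratedDeriv (i + 1) f x ≠ 0

/-!
Enumerate `A` as `a₀ < ⋯ < aₘ` and put `dᵢ = aᵢ₊₁ - aᵢ`. For `dᵢ ≤ dⱼ` the point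
`aⱼ + dᵢ ∈ A + A - A` lies in `(aⱼ, aⱼ₊₁]`, so the ranks of the gaps `dⱼ` among the distinct gap
values sum to at most `|A + A - A| ≤ K|A|`. By Markov's inequality at least half of the gaps take
one of at most `4K` values, and Cauchy–Schwarz gives `≫ |A|²/K` pairs `i ≠ j` with `dᵢ = dⱼ`.
Replacing `f` by `-f` if necessary, `f` is increasing and strictly convex or concave on `I`, so
for such a pair the `f`-gaps `eᵢ = f(aᵢ₊₁) - f(aᵢ)` and `eⱼ` differ; if `eᵢ < eⱼ`, the point
`f(aⱼ) + eᵢ ∈ 2f(A) - f(A)` lies in `(f(aⱼ), f(aⱼ₊₁))` and determines the pair. Hence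
`|2f(A) - f(A)| ≥ |A|²/(64K)`, which beats the claimed bound once `log |A| ≥ 1`.
-/

lemma strictMonoOn_or_strictAntiOn_of_deriv_ne_zero {f : ℝ → ℝ} {I : Set ℝ}
    (hI : I.OrdConnected) (hf : ∀ x ∈ I, DifferentiableAt ℝ f x)
    (hf' : ∀ x ∈ I, deriv f x ≠ 0) : StrictMonoOn f I ∨ StrictAntiOn f I := by
  have hcont : ContinuousOn f I := fun x hx => (hf x hx).continuousAt.continuousWithinAt
  rcases hasDerivWithinAt_forall_lt_or_forall_gt_of_forall_ne hI.convex
    (fun x hx => (hf x hx).hasDerivAt.hasDerivWithinAt) hf' with hneg | hpos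
  · exact .inr <| strictAntiOn_of_deriv_neg hI.convex hcont fun x hx => hneg x (interior_subset hx)
  · exact .inl <| strictMonoOn_of_deriv_pos hI.convex hcont fun x hx => hpos x (interior_subset hx)

lemma FnKConvexOn.strictMonoOn_or_strictAntiOn {k : ℕ} {f : ℝ → ℝ} {I : Set ℝ}
    (hf : FnKConvexOn k f I) (hI : I.OrdConnected) : StrictMonoOn f I ∨ StrictAntiOn f I := by
  obtain ⟨hdiff, hne⟩ := hf 0 k.zero_le
  simp only [iteratedDeriv_zero, zero_add, iteratedDeriv_one] at hdiff hne
  exact strictMonoOn_or_strictAntiOn_of_deriv_ne_zero hI hdiff hne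

lemma FnKConvexOn.strictConvexOn_or_strictConcaveOn {k : ℕ} {f : ℝ → ℝ} {I : Set ℝ}
    (hf : FnKConvexOn k f I) (hk : 1 ≤ k) (hI : I.OrdConnected) :
    StrictConvexOn ℝ I f ∨ StrictConcaveOn ℝ I f := by
  obtain ⟨hdiff, -⟩ := hf 0 k.zero_le
  obtain ⟨hdiff', hne'⟩ := hf 1 hk
  simp only [iteratedDeriv_zero, iteratedDeriv_succ] at hdiff hdiff' hne'
  have hcont : ContinuousOn f I := fun x hx => (hdiff x hx).continuousAt.continuousWithinAt
  rcases strictMonoOn_or_strictAntiOn_of_deriv_ne_zero hI hdiff' hne' with hmono | hanti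
  · exact .inl <| (hmono.mono interior_subset).strictConvexOn_of_deriv hI.convex hcont
  · exact .inr <| (hanti.mono interior_subset).strictConcaveOn_of_deriv hI.convex hcont

lemma StrictConvexOn.sub_lt_sub_of_lt {f : ℝ → ℝ} {s : Set ℝ} (hf : StrictConvexOn ℝ s f)
    {u w h : ℝ} (hu : u ∈ s) (hwh : w + h ∈ s) (huw : u < w) (hh : 0 < h) :
    f (u + h) - f u < f (w + h) - f w := by
  have huh : u + h ∈ s := hf.1.ordConnected.out hu hwh ⟨by linarith, by linarith⟩
  have hw : w ∈ s := hf.1.ordConnected.out hu hwh ⟨huw.le, by linarith⟩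
  have h₁ := hf.secant_strict_mono hu huh hwh (by linarith) (by linarith) (by linarith)
  have h₂ := hf.secant_strict_mono hwh hu hw (by linarith) (by linarith) huw
  rw [add_sub_cancel_left] at h₁
  rw [show w - (w + h) = -h by ring, div_neg, ← neg_div, neg_sub] at h₂
  rw [← neg_div_neg_eq, neg_sub, neg_sub] at h₂
  have := h₁.trans h₂
  rwa [div_lt_div_iff_of_pos_right hh] at this

lemma sub_ne_sub_of_strictConvexOn_or_strictConcaveOn {f : ℝ → ℝ} {s : Set ℝ}
    (hf : StrictConvexOn ℝ s f ∨ StrictConcaveOn ℝ s f) {u w h : ℝ} (hu : u ∈ s)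
    (hwh : w + h ∈ s) (huw : u < w) (hh : 0 < h) : f (u + h) - f u ≠ f (w + h) - f w := by
  rcases hf with hconv | hconc
  · exact (hconv.sub_lt_sub_of_lt hu hwh huw hh).ne
  · have := hconc.neg.sub_lt_sub_of_lt hu hwh huw hh
    simp only [Pi.neg_apply] at this
    linarith

lemma card_filter_eq_eq_two_mul_add {ι : Type*} [Fintype ι] [DecidableEq ι] {d δ : ι → ℝ}
    (hinj : ∀ i j, d i = d j → δ i = δ j → i = j) :
    #{p : ι × ι | d p.1 = d p.2} =
      2 * #{p : ι × ι | d p.1 = d p.2 ∧ δ p.1 < δ p.2} + Fintype.card ι := by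
  set L : Finset (ι × ι) := {p | d p.1 = d p.2 ∧ δ p.1 < δ p.2}
  set G : Finset (ι × ι) := {p | d p.1 = d p.2 ∧ δ p.2 < δ p.1}
  have hsplit : ({p : ι × ι | d p.1 = d p.2} : Finset (ι × ι)) = L ∪ G ∪ univ.diag := by
    ext ⟨i, j⟩
    simp only [L, G, mem_filter, mem_union, mem_diag, mem_univ, true_and]
    constructor
    · intro hd
      rcases lt_trichotomy (δ i) (δ j) with h | h | h
      · exact .inl (.inl ⟨hd, h⟩)
      · exact .inr (hinj i j hd h)
      · exact .inl (.inr ⟨hd, h⟩)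
    · rintro ((⟨hd, -⟩ | ⟨hd, -⟩) | rfl) <;> trivial
  have hswap : #G = #L :=
    card_equiv (Equiv.prodComm ι ι) fun ⟨i, j⟩ => by
      simp only [L, G, mem_filter, mem_univ, true_and, Equiv.prodComm_apply, Prod.swap, eq_comm]
  rw [hsplit, card_union_of_disjoint, card_union_of_disjoint, hswap, diag_card, card_univ, two_mul]
  · exact disjoint_filter.2 fun p _ h h' => lt_asymm h.2 h'.2
  · refine disjoint_left.2 fun ⟨i, j⟩ hp hdiag => ?_
    simp only [L, G, mem_union, mem_filter, mem_diag, mem_univ, true_and] at hp hdiag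
    subst hdiag
    rcases hp with ⟨-, h⟩ | ⟨-, h⟩ <;> exact lt_irrefl _ h

lemma sq_card_le_card_image_mul_card_filter_eq {α β : Type*} [DecidableEq β] (T : Finset α)
    (d : α → β) : #T ^ 2 ≤ #(T.image d) * #{p ∈ T ×ˢ T | d p.1 = d p.2} := by
  have hfiber : #{p ∈ T ×ˢ T | d p.1 = d p.2} = ∑ v ∈ T.image d, #{i ∈ T | d i = v} ^ 2 := by
    rw [card_eq_sum_card_fiberwise (f := fun p => d p.1) (t := T.image d)]
    · refine sum_congr rfl fun v _ => ?_
      rw [sq, ← card_product, filter_filter]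
      congr 1
      ext ⟨i, j⟩
      simp only [mem_filter, mem_product]
      constructor
      · rintro ⟨⟨hi, hj⟩, hij, rfl⟩
        exact ⟨⟨hi, rfl⟩, hj, hij.symm⟩
      · rintro ⟨⟨hi, rfl⟩, hj, hji⟩
        exact ⟨⟨hi, hj⟩, hji.symm, rfl⟩
    · intro p hp
      simp only [coe_filter, mem_product] at hp
      exact mem_image_of_mem d hp.1.1
  rw [card_eq_sum_card_fiberwise (f := d) (t := T.image d) fun i hi => mem_image_of_mem d hi,
    hfiber]
  exact sq_sum_le_card_mul_sum_sq

noncomputable def valueRank {ι : Type*} [Fintype ι] (d : ι → ℝ) (j : ι) : ℕ :=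
  #{v ∈ univ.image d | v ≤ d j}

lemma card_image_le_of_valueRank_le {ι : Type*} [Fintype ι] {d : ι → ℝ} {T : Finset ι} {R : ℝ}
    (hR : 0 ≤ R) (hT : ∀ j ∈ T, (valueRank d j : ℝ) ≤ R) : (#(T.image d) : ℝ) ≤ R := by
  rcases T.eq_empty_or_nonempty with rfl | hne
  · simpa using hR
  obtain ⟨j, hj, hmax⟩ := exists_max_image T d hne
  refine le_trans ?_ (hT j hj)
  refine Nat.cast_le.2 (card_le_card fun v hv => ?_)
  obtain ⟨i, hi, rfl⟩ := mem_image.1 hv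
  exact mem_filter.2 ⟨mem_image_of_mem d (mem_univ i), hmax i hi⟩

lemma sq_sub_le_mul_card_filter_eq {ι : Type*} [Fintype ι] (d : ι → ℝ) {K N : ℝ} (hK : 0 < K)
    (hrank : ∑ j, (valueRank d j : ℝ) ≤ K * N) (hN : N / 4 ≤ Fintype.card ι) :
    (Fintype.card ι - N / 4) ^ 2 ≤ 4 * K * #{p : ι × ι | d p.1 = d p.2} := by
  set J : Finset ι := {j | (valueRank d j : ℝ) ≤ 4 * K}
  have hMarkov : (#{j | ¬(valueRank d j : ℝ) ≤ 4 * K} : ℝ) * (4 * K) ≤ K * N := by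
    calc (#{j | ¬(valueRank d j : ℝ) ≤ 4 * K} : ℝ) * (4 * K)
        = ∑ j ∈ {j | ¬(valueRank d j : ℝ) ≤ 4 * K}, 4 * K := by rw [sum_const, nsmul_eq_mul]
      _ ≤ ∑ j ∈ {j | ¬(valueRank d j : ℝ) ≤ 4 * K}, (valueRank d j : ℝ) :=
        sum_le_sum fun j hj => (not_le.1 (mem_filter.1 hj).2).le
      _ ≤ ∑ j, (valueRank d j : ℝ) := sum_le_sum_of_subset_of_nonneg (subset_univ _)
          fun j _ _ => Nat.cast_nonneg _
      _ ≤ K * N := hrank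
  have hJ : Fintype.card ι - N / 4 ≤ #J := by
    have hsplit := card_filter_add_card_filter_not (s := univ) fun j => (valueRank d j : ℝ) ≤ 4 * K
    rw [card_univ] at hsplit
    have : (#{j | ¬(valueRank d j : ℝ) ≤ 4 * K} : ℝ) ≤ N / 4 := by
      rw [le_div_iff₀ (by norm_num)]
      nlinarith
    rw [← hsplit]
    push_cast
    linarith
  have himage : (#(J.image d) : ℝ) ≤ 4 * K :=
    card_image_le_of_valueRank_le (by positivity) fun j hj => (mem_filter.1 hj).2
  have hpairs : #{p ∈ J ×ˢ J | d p.1 = d p.2} ≤ #{p : ι × ι | d p.1 = d p.2} :=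
    card_le_card (filter_subset_filter _ (subset_univ _))
  calc (Fintype.card ι - N / 4) ^ 2 ≤ (#J : ℝ) ^ 2 := pow_le_pow_left₀ (sub_nonneg.2 hN) hJ 2
    _ ≤ #(J.image d) * #{p ∈ J ×ˢ J | d p.1 = d p.2} := by
      exact_mod_cast sq_card_le_card_image_mul_card_filter_eq J d
    _ ≤ 4 * K * #{p : ι × ι | d p.1 = d p.2} :=
      mul_le_mul himage (Nat.cast_le.2 hpairs) (Nat.cast_nonneg _) (by positivity)

section Gaps

variable {m : ℕ}

def gap (a : Fin (m + 1) → ℝ) (i : Fin m) : ℝ := a i.succ - a i.castSucc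

lemma gap_pos_s4 {a : Fin (m + 1) → ℝ} (ha : StrictMono a) (i : Fin m) : 0 < gap a i :=
  sub_pos.2 (ha i.castSucc_lt_succ)

lemma sum_card_le_card_of_add_mem {y : Fin (m + 1) → ℝ} (hy : StrictMono y)
    (T : Fin m → Finset ℝ) (hT : ∀ j, ∀ t ∈ T j, 0 < t ∧ t ≤ gap y j) {S : Finset ℝ}
    (hS : ∀ j, ∀ t ∈ T j, y j.castSucc + t ∈ S) : ∑ j, #(T j) ≤ #S := by
  -- `y j + t` lies in `(y j, y (j + 1)]`, and these intervals are pairwise disjoint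
  have hlt : ∀ j j', j < j' → ∀ t ∈ T j, ∀ t' ∈ T j',
      y j.castSucc + t < y j'.castSucc + t' := by
    intro j j' hjj' t ht t' ht'
    have : y j.succ ≤ y j'.castSucc := hy.monotone (Fin.succ_le_castSucc_iff.2 hjj')
    linarith [(hT j t ht).2, (hT j' t' ht').1, show gap y j = y j.succ - y j.castSucc from rfl]
  rw [← card_sigma]
  refine card_le_card_of_injOn (fun p => y p.1.castSucc + p.2) (fun p hp => ?_) ?_
  · simp only [coe_sigma, Set.mem_sigma_iff, mem_univ, mem_coe, true_and] at hp
    exact hS _ _ hp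
  · rintro ⟨j, t⟩ hp ⟨j', t'⟩ hp' heq
    simp only [coe_sigma, Set.mem_sigma_iff, mem_univ, mem_coe, true_and] at hp hp' heq
    rcases lt_trichotomy j j' with h | rfl | h
    · exact absurd heq (hlt j j' h t hp t' hp').ne
    · rw [add_left_cancel heq]
    · exact absurd heq (hlt j' j h t' hp' t hp).ne'

lemma sum_valueRank_gap_le_card {a : Fin (m + 1) → ℝ} (ha : StrictMono a) {D : Finset ℝ}
    (hD : ∀ p q r, a p + a q - a r ∈ D) :
    ∑ j, valueRank (gap a) j ≤ #D := by
  refine sum_card_le_card_of_add_mem ha _ (fun j t ht => ?_) (fun j t ht => ?_)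
  all_goals obtain ⟨⟨i, -, rfl⟩, hij⟩ := by simpa only [mem_filter, mem_image] using ht
  · exact ⟨gap_pos_s4 ha i, hij⟩
  · simpa only [gap, add_sub_assoc'] using hD j.castSucc i.succ i.castSucc

lemma card_filter_gap_lt_le_card {y : Fin (m + 1) → ℝ} (hy : StrictMono y) (d : Fin m → ℝ)
    (hinj : ∀ i j, d i = d j → gap y i = gap y j → i = j) {S : Finset ℝ}
    (hS : ∀ p q r, y p + y q - y r ∈ S) :
    #{p : Fin m × Fin m | d p.1 = d p.2 ∧ gap y p.1 < gap y p.2} ≤ #S := by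
  calc #{p : Fin m × Fin m | d p.1 = d p.2 ∧ gap y p.1 < gap y p.2}
      = ∑ j, #{i | d i = d j ∧ gap y i < gap y j} := by
        simp only [card_filter, Fintype.sum_prod_type_right]
    _ = ∑ j, #(({i | d i = d j ∧ gap y i < gap y j} : Finset (Fin m)).image (gap y)) := by
        refine Fintype.sum_congr _ _ fun j => (card_image_of_injOn ?_).symm
        intro i hi i' hi' heq
        simp only [mem_coe, mem_filter, mem_univ, true_and] at hi hi'
        exact hinj i i' (hi.1.trans hi'.1.symm) heq
    _ ≤ #S := by
        refine sum_card_le_card_of_add_mem hy _ (fun j t ht => ?_) (fun j t ht => ?_)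
        all_goals obtain ⟨i, hi, rfl⟩ := mem_image.1 ht
        · exact ⟨gap_pos_s4 hy i, (mem_filter.1 hi).2.2.le⟩
        · simpa only [gap, add_sub_assoc'] using hS j.castSucc i.succ i.castSucc

lemma gap_comp_injective {a : Fin (m + 1) → ℝ} (ha : StrictMono a) {f : ℝ → ℝ}
    {s : Set ℝ} (hf : StrictConvexOn ℝ s f ∨ StrictConcaveOn ℝ s f) (has : ∀ p, a p ∈ s)
    (i j : Fin m) (hgap : gap a i = gap a j) (hfgap : gap (f ∘ a) i = gap (f ∘ a) j) : i = j := by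
  by_contra hne
  wlog hij : i < j generalizing i j
  · exact this j i hgap.symm hfgap.symm (Ne.symm hne) ((not_lt.1 hij).lt_of_ne (Ne.symm hne))
  have hi : a i.castSucc + gap a i = a i.succ := add_sub_cancel _ _
  have hj : a j.castSucc + gap a i = a j.succ := by rw [hgap]; exact add_sub_cancel _ _
  refine sub_ne_sub_of_strictConvexOn_or_strictConcaveOn hf (has i.castSucc) (hj ▸ has j.succ)
    (ha (Fin.castSucc_lt_castSucc_iff.2 hij)) (gap_pos_s4 ha i) ?_
  rw [hi, hj]
  exact hfgap

lemma card_le_card_of_add_sub_mem {y : Fin (m + 1) → ℝ} (hy : Function.Injective y)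
    {S : Finset ℝ} (hS : ∀ p q r, y p + y q - y r ∈ S) : (m : ℝ) + 1 ≤ #S := by
  have := card_le_card_of_injOn (s := univ) y (fun p _ => by simpa using hS p p p) hy.injOn
  rw [card_univ, Fintype.card_fin] at this
  exact_mod_cast this

theorem sq_div_le_card_of_gap_injective {a y : Fin (m + 1) → ℝ} (ha : StrictMono a)
    (hy : StrictMono y) (hinj : ∀ i j, gap a i = gap a j → gap y i = gap y j → i = j)
    {D S : Finset ℝ} (hD : ∀ p q r, a p + a q - a r ∈ D) (hS : ∀ p q r, y p + y q - y r ∈ S)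
    {K : ℝ} (hDK : (#D : ℝ) ≤ K * (m + 1)) : ((m : ℝ) + 1) ^ 2 / (64 * K) ≤ #S := by
  have hnS := card_le_card_of_add_sub_mem hy.injective hS
  have hK : 1 ≤ K := by
    have := card_le_card_of_add_sub_mem ha.injective hD
    nlinarith
  rw [div_le_iff₀ (by positivity)]
  rcases le_or_gt ((m : ℝ) + 1) (32 * K) with hsmall | hlarge
  · -- for `|A| ≤ 32 K` the bound follows from `|A| ≤ #S`
    nlinarith
  have hP := card_filter_gap_lt_le_card hy (gap a) hinj hS
  have hE := card_filter_eq_eq_two_mul_add hinj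
  have hrank : ∑ j, (valueRank (gap a) j : ℝ) ≤ K * (m + 1) :=
    le_trans (by exact_mod_cast sum_valueRank_gap_le_card ha hD) hDK
  have hCS := sq_sub_le_mul_card_filter_eq (gap a) (by positivity) hrank
    (by rw [Fintype.card_fin]; linarith)
  rw [hE, Fintype.card_fin] at hCS
  push_cast at hCS
  have hhalf : ((m : ℝ) + 1) / 2 ≤ m - ((m : ℝ) + 1) / 4 := by linarith
  have hsq := pow_le_pow_left₀ (by positivity) hhalf 2
  have hKP : K * #{p : Fin m × Fin m | gap a p.1 = gap a p.2 ∧ gap y p.1 < gap y p.2} ≤ K * #S :=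
    mul_le_mul_of_nonneg_left (by exact_mod_cast hP) (by positivity)
  nlinarith

end Gaps

theorem sq_div_le_card_of_strictMonoOn {f : ℝ → ℝ} {s : Set ℝ} (hmono : StrictMonoOn f s)
    (hconv : StrictConvexOn ℝ s f ∨ StrictConcaveOn ℝ s f) {A : Finset ℝ} (hAs : ↑A ⊆ s)
    {K : ℝ} (hK : (#(A + A - A) : ℝ) ≤ K * #A) {S : Finset ℝ}
    (hS : ∀ x ∈ A, ∀ y ∈ A, ∀ z ∈ A, f x + f y - f z ∈ S) : (#A : ℝ) ^ 2 / (64 * K) ≤ #S := by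
  rcases A.eq_empty_or_nonempty with rfl | hA
  · simp
  obtain ⟨m, hm⟩ : ∃ m, #A = m + 1 := ⟨#A - 1, by have := hA.card_pos; omega⟩
  set a := A.orderEmbOfFin hm
  have haA : ∀ p, a p ∈ A := A.orderEmbOfFin_mem hm
  rw [hm, Nat.cast_succ] at hK ⊢
  exact sq_div_le_card_of_gap_injective a.strictMono
    (fun p q hpq => hmono (hAs (haA p)) (hAs (haA q)) (a.strictMono hpq))
    (gap_comp_injective a.strictMono hconv fun p => hAs (haA p))
    (fun p q r => sub_mem_sub (add_mem_add (haA p) (haA q)) (haA r))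
    (fun p q r => hS _ (haA p) _ (haA q) _ (haA r)) hK

theorem FnKConvexOn.sq_div_le_card_image_add_sub {k : ℕ} {f : ℝ → ℝ} {I : Set ℝ}
    (hf : FnKConvexOn k f I) (hk : 1 ≤ k) (hI : I.OrdConnected) {A : Finset ℝ} (hAI : ↑A ⊆ I)
    {K : ℝ} (hK : (#(A + A - A) : ℝ) ≤ K * #A) :
    (#A : ℝ) ^ 2 / (64 * K) ≤ #(A.image f + A.image f - A.image f) := by
  have hconv := hf.strictConvexOn_or_strictConcaveOn hk hI
  have hmem : ∀ x ∈ A, ∀ y ∈ A, ∀ z ∈ A, f x + f y - f z ∈ A.image f + A.image f - A.image f :=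
    fun x hx y hy z hz => sub_mem_sub (add_mem_add (mem_image_of_mem f hx)
      (mem_image_of_mem f hy)) (mem_image_of_mem f hz)
  rcases hf.strictMonoOn_or_strictAntiOn hI with hmono | hanti
  · exact sq_div_le_card_of_strictMonoOn hmono hconv hAI hK hmem
  · rw [← card_neg (A.image f + A.image f - A.image f)]
    refine sq_div_le_card_of_strictMonoOn hanti.neg (hconv.symm.imp StrictConcaveOn.neg
      StrictConvexOn.neg) hAI hK fun x hx y hy z hz => ?_
    rw [show -f x + -f y - -f z = -(f x + f y - f z) by ring]
    exact neg_mem_neg (hmem x hx y hy z hz)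

lemma iterSum_two_sub_iterSum_one (B : Finset ℝ) : iterSum 2 B - iterSum 1 B = B + B - B := by
  simp [iterSum, add_singleton]

/-- If `f` is `1`-convex on an interval `I` and `A ⊆ I` is a sufficiently large finite set
with `|A + A - A| ≤ K|A|`, then `|2f(A) - f(A)| ≫ |A|² / (K (log |A|)³)`. -/
theorem stmt4 :
    ∃ c : ℝ, 0 < c ∧ ∃ N₀ : ℕ, ∀ (I : Set ℝ) (f : ℝ → ℝ) (A : Finset ℝ) (K : ℝ),
      I.OrdConnected → FnKConvexOn 1 f I → ↑A ⊆ I → N₀ ≤ A.card →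
      ((iterSum 2 A - iterSum 1 A).card : ℝ) ≤ K * A.card →
      c * (A.card : ℝ) ^ 2 / (K * Real.log A.card ^ 3) ≤
        ((iterSum 2 (A.image f) - iterSum 1 (A.image f)).card : ℝ) := by
  refine ⟨1 / 64, by norm_num, 3, fun I f A K hI hf hAI hA hK => ?_⟩
  rw [iterSum_two_sub_iterSum_one] at hK ⊢
  have hn : (3 : ℝ) ≤ #A := by exact_mod_cast hA
  have hK0 : 0 < K := by
    have hA' : A.Nonempty := card_pos.1 (by omega)
    have : (0 : ℝ) < #(A + A - A) := by exact_mod_cast ((hA'.add hA').sub hA').card_pos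
    nlinarith
  have hlog : 1 ≤ Real.log #A := by
    rw [Real.le_log_iff_exp_le (by positivity)]
    linarith [Real.exp_one_lt_d9]
  calc 1 / 64 * (#A : ℝ) ^ 2 / (K * Real.log #A ^ 3)
      = (#A : ℝ) ^ 2 / (64 * K) / Real.log #A ^ 3 := by ring
    _ ≤ (#A : ℝ) ^ 2 / (64 * K) := div_le_self (by positivity) (one_le_pow₀ hlog)
    _ ≤ _ := hf.sq_div_le_card_image_add_sub le_rfl hI hAI hK
end

section
/- Let k ≥ 1, let f be k-convex on the interval [a, b], let 1 ≤ j ≤ k, and let h₁, …, h_j > 0 be such that h₁ + ⋯ + h_j < b − a. Then the iterated difference function Δ_{h₁,…,h_j} f is strictly monotone on [a, b − (h₁ + ⋯ + h_j)]. -/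
/-- The iterated difference operator: `iterDiff f [] = f` and
`iterDiff f (h :: hs) = Δ_h (iterDiff f hs)`, where `(Δ_h g)(x) = g(x + h) - g(x)`. -/
def iterDiff (f : ℝ → ℝ) : List ℝ → ℝ → ℝ
  | [] => f
  | h :: hs => fun x => iterDiff f hs (x + h) - iterDiff f hs x

/-!
Differentiating under `Δ_{h₁,…,h_j}` gives `(Δ_{h₁,…,h_j} f)' = Δ_{h₁,…,h_j} f'`. Induct on `j`:
by induction `Δ_{h₂,…,h_j} f'` is strictly monotone, hence injective, so
`Δ_{h₁,…,h_j} f' = Δ_{h₁} (Δ_{h₂,…,h_j} f')` never vanishes. A derivative that never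
vanishes on an interval has constant sign (Darboux), so `Δ_{h₁,…,h_j} f` is strictly monotone.
For `j = 0` the same argument applies directly to `f' ≠ 0`.
-/

open Set

namespace FnKConvexOn

variable {k m : ℕ} {f : ℝ → ℝ} {I : Set ℝ}

theorem mono (hf : FnKConvexOn m f I) (hkm : k ≤ m) : FnKConvexOn k f I :=
  fun i hi => hf i (hi.trans hkm)

theorem fnKConvexOn_deriv (hf : FnKConvexOn (k + 1) f I) : FnKConvexOn k (deriv f) I := by
  intro i hi
  simpa only [← iteratedDeriv_succ'] using hf (i + 1) (by omega)

theorem differentiableAt (hf : FnKConvexOn k f I) {x : ℝ} (hx : x ∈ I) :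
    DifferentiableAt ℝ f x := by
  simpa only [iteratedDeriv_zero] using (hf 0 k.zero_le).1 x hx

theorem deriv_ne_zero (hf : FnKConvexOn k f I) {x : ℝ} (hx : x ∈ I) :
    deriv f x ≠ 0 := by
  simpa only [zero_add, iteratedDeriv_one] using (hf 0 k.zero_le).2 x hx

end FnKConvexOn

theorem hasDerivAt_iterDiff {g : ℝ → ℝ} {hs : List ℝ} (hpos : ∀ h ∈ hs, 0 ≤ h) {x : ℝ}
    (hg : ∀ y ∈ Icc x (x + hs.sum), DifferentiableAt ℝ g y) :
    HasDerivAt (iterDiff g hs) (iterDiff (deriv g) hs x) x := by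
  induction hs generalizing x with
  | nil => simpa [iterDiff] using (hg x (by simp)).hasDerivAt
  | cons h t ih =>
    have hh : 0 ≤ h := hpos h List.mem_cons_self
    have htpos : ∀ h' ∈ t, 0 ≤ h' := fun h' hh' => hpos h' (List.mem_cons_of_mem _ hh')
    have ht : 0 ≤ t.sum := List.sum_nonneg htpos
    rw [List.sum_cons] at hg
    have hshift : HasDerivAt (iterDiff g t) (iterDiff (deriv g) t (x + h)) (x + h) :=
      ih htpos fun y hy => hg y ⟨by linarith [hy.1], by linarith [hy.2]⟩
    have hbase : HasDerivAt (iterDiff g t) (iterDiff (deriv g) t x) x :=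
      ih htpos fun y hy => hg y ⟨hy.1, by linarith [hy.2]⟩
    exact (hshift.comp_add_const x h).sub hbase

theorem strictMonoOn_or_strictAntiOn_of_hasDerivAt_ne_zero {D : Set ℝ} (hD : Convex ℝ D)
    {g g' : ℝ → ℝ} (hg : ∀ x ∈ D, HasDerivAt g (g' x) x) (hne : ∀ x ∈ D, g' x ≠ 0) :
    StrictMonoOn g D ∨ StrictAntiOn g D := by
  have hcont : ContinuousOn g D := fun x hx => (hg x hx).continuousAt.continuousWithinAt
  have hderiv : ∀ x ∈ D, deriv g x = g' x := fun x hx => (hg x hx).deriv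
  rcases hasDerivWithinAt_forall_lt_or_forall_gt_of_forall_ne hD
      (fun x hx => (hg x hx).hasDerivWithinAt) hne with hneg | hposi
  · refine Or.inr (strictAntiOn_of_deriv_neg hD hcont fun x hx => ?_)
    rw [hderiv x (interior_subset hx)]
    exact hneg x (interior_subset hx)
  · refine Or.inl (strictMonoOn_of_deriv_pos hD hcont fun x hx => ?_)
    rw [hderiv x (interior_subset hx)]
    exact hposi x (interior_subset hx)

theorem iterDiff_cons_ne_zero {g : ℝ → ℝ} {h a b : ℝ} {t : List ℝ} (hh : 0 < h)
    (hinj : InjOn (iterDiff g t) (Icc a (b - t.sum))) {x : ℝ}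
    (hx : x ∈ Icc a (b - (h :: t).sum)) : iterDiff g (h :: t) x ≠ 0 := by
  rw [List.sum_cons] at hx
  have hxh : x + h ∈ Icc a (b - t.sum) := ⟨by linarith [hx.1], by linarith [hx.2]⟩
  have hx' : x ∈ Icc a (b - t.sum) := ⟨hx.1, by linarith [hx.2]⟩
  exact sub_ne_zero.mpr (hinj.ne hxh hx' (by linarith))

theorem strictMonoOn_or_strictAntiOn_iterDiff_of_ne_zero {f : ℝ → ℝ} {a b : ℝ} {hs : List ℝ}
    (hf : ∀ x ∈ Icc a b, DifferentiableAt ℝ f x) (hpos : ∀ h ∈ hs, 0 ≤ h)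
    (hne : ∀ x ∈ Icc a (b - hs.sum), iterDiff (deriv f) hs x ≠ 0) :
    StrictMonoOn (iterDiff f hs) (Icc a (b - hs.sum)) ∨
      StrictAntiOn (iterDiff f hs) (Icc a (b - hs.sum)) :=
  strictMonoOn_or_strictAntiOn_of_hasDerivAt_ne_zero (convex_Icc _ _)
    (fun x hx => hasDerivAt_iterDiff hpos fun y hy =>
      hf y ⟨hx.1.trans hy.1, by linarith [hx.2, hy.2]⟩) hne

theorem FnKConvexOn.strictMonoOn_or_strictAntiOn_iterDiff {f : ℝ → ℝ} {a b : ℝ} {hs : List ℝ}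
    (hf : FnKConvexOn hs.length f (Icc a b)) (hpos : ∀ h ∈ hs, 0 < h) :
    StrictMonoOn (iterDiff f hs) (Icc a (b - hs.sum)) ∨
      StrictAntiOn (iterDiff f hs) (Icc a (b - hs.sum)) := by
  induction hs generalizing f with
  | nil =>
    exact strictMonoOn_or_strictAntiOn_iterDiff_of_ne_zero (fun x hx => hf.differentiableAt hx)
      (by simp) fun x hx => hf.deriv_ne_zero ⟨hx.1, by simpa using hx.2⟩
  | cons h t ih =>
    have htpos : ∀ h' ∈ t, 0 < h' := fun h' hh' => hpos h' (List.mem_cons_of_mem _ hh')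
    have hinj : InjOn (iterDiff (deriv f) t) (Icc a (b - t.sum)) :=
      (ih hf.fnKConvexOn_deriv htpos).elim StrictMonoOn.injOn StrictAntiOn.injOn
    exact strictMonoOn_or_strictAntiOn_iterDiff_of_ne_zero (fun x hx => hf.differentiableAt hx)
      (fun h hh => (hpos h hh).le) fun x hx =>
        iterDiff_cons_ne_zero (hpos h List.mem_cons_self) hinj hx

theorem stmt13_general (k : ℕ) (f : ℝ → ℝ) (a b : ℝ)
    (hf : FnKConvexOn k f (Set.Icc a b)) (hs : List ℝ)
    (hjk : hs.length ≤ k)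
    (hpos : ∀ h ∈ hs, (0 : ℝ) < h) :
    StrictMonoOn (iterDiff f hs) (Set.Icc a (b - hs.sum)) ∨
      StrictAntiOn (iterDiff f hs) (Set.Icc a (b - hs.sum)) :=
  (hf.mono hjk).strictMonoOn_or_strictAntiOn_iterDiff hpos

/-- If `f` is `k`-convex on `[a, b]` (`k ≥ 1`), `1 ≤ j ≤ k`, and `h₁, …, h_j > 0` with
`h₁ + ⋯ + h_j < b - a`, then the iterated difference `Δ_{h₁,…,h_j} f` is strictly monotone
on `[a, b - (h₁ + ⋯ + h_j)]`. -/
theorem stmt13 (k : ℕ) (hk : 1 ≤ k) (f : ℝ → ℝ) (a b : ℝ)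
    (hf : FnKConvexOn k f (Set.Icc a b)) (hs : List ℝ)
    (hlen : 1 ≤ hs.length) (hjk : hs.length ≤ k)
    (hpos : ∀ h ∈ hs, (0 : ℝ) < h) (hsum : hs.sum < b - a) :
    StrictMonoOn (iterDiff f hs) (Set.Icc a (b - hs.sum)) ∨
      StrictAntiOn (iterDiff f hs) (Set.Icc a (b - hs.sum)) :=
  stmt13_general k f a b hf hs hjk hpos
end
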